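/- If Σ₁ and Σ₂ are signed graphs and Σ₂ is balanced, then the balancing dimension of the Cartesian product Σ₁ □ Σ₂ equals the balancing dimension of Σ₁. -/

import Mathlib

/-!
Since `Σ₂` is balanced, its 1-switching can be taken `±1`-valued, i.e. a potential `η` with
`σ₂(ab) = η(a) η(b)`. Take a positive `k`-switching `ζ` of `Σ₁`; its zero vectors sit at isolated
vertices and can be replaced by a basis vector. Then `(u, v) ↦ η(v) ζ(u)` switches `Σ₁ □ Σ₂` to
all-positive: along a `Σ₁`-edge `η(v)² = 1` leaves `⟨ζ u, ζ u'⟩` unchanged, and along a `Σ₂`-edge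
the inner product is `η(a) η(b) ‖ζ u‖²`, of sign `σ₂(ab)`. Conversely, a positive switching of the
product restricts to one of any fibre `Σ₁ × {v}`, and `V₂` is nonempty.
-/

open Finset
open scoped Classical

/-- A signed graph: a simple graph together with a ±1 sign on each edge. -/
structure SGraph (V : Type*) where
  G : SimpleGraph V
  sign : V → V → ℤ
  sign_symm : ∀ u v, sign u v = sign v u
  sign_mem : ∀ u v, G.Adj u v → sign u v = 1 ∨ sign u v = -1

variable {V V1 V2 W : Type*}

/-- `ζ` is a positive k-switching function for the signed graph `S`. -/
def IsPosSwitching [Fintype V] (S : SGraph V) (k : ℕ) (ζ : V → Fin k → ℤ) : Prop :=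
  (∀ v i, ζ v i = -1 ∨ ζ v i = 0 ∨ ζ v i = 1) ∧
  (∀ u v, S.G.Adj u v → (∑ i, ζ u i * ζ v i) ≠ 0) ∧
  (∀ u v, S.G.Adj u v → S.sign u v * Int.sign (∑ i, ζ u i * ζ v i) = 1)

def HasPosSwitching [Fintype V] (S : SGraph V) (k : ℕ) : Prop :=
  ∃ ζ : V → Fin k → ℤ, IsPosSwitching S k ζ

/-- The balancing dimension: least `k ≥ 1` admitting a positive k-switching function. -/
noncomputable def bdim [Fintype V] (S : SGraph V) : ℕ :=
  sInf {k | 1 ≤ k ∧ HasPosSwitching S k}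

/-- A signed graph is balanced iff it can be switched to all-positive by a 1-switching. -/
def SGraph.Balanced [Fintype V] (S : SGraph V) : Prop := HasPosSwitching S 1

/-- The negation of a signed graph. -/
def SGraph.neg (S : SGraph V) : SGraph V where
  G := S.G
  sign := fun u v => - S.sign u v
  sign_symm := fun u v => by (try dsimp only); rw [S.sign_symm]
  sign_mem := fun u v h => by rcases S.sign_mem u v h with h1 | h1 <;> simp [h1]

def SGraph.Antibalanced [Fintype V] (S : SGraph V) : Prop := S.neg.Balanced

/-- Switching equivalence of signed graphs. -/
def SwitchEquiv (S1 S2 : SGraph V) : Prop :=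
  S1.G = S2.G ∧ ∃ η : V → ℤ, (∀ v, η v = 1 ∨ η v = -1) ∧
    ∀ u v, S1.G.Adj u v → S2.sign u v = η u * S1.sign u v * η v

/-- The Cartesian product of signed graphs. -/
noncomputable def cartProd (S1 : SGraph V1) (S2 : SGraph V2) : SGraph (V1 × V2) where
  G := S1.G □ S2.G
  sign := fun p q => if p.2 = q.2 then S1.sign p.1 q.1 else S2.sign p.2 q.2
  sign_symm := by
    intro u v
    (try dsimp only)
    rcases eq_or_ne u.2 v.2 with h | h
    · rw [if_pos h, if_pos h.symm, S1.sign_symm]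
    · rw [if_neg h, if_neg (Ne.symm h), S2.sign_symm]
  sign_mem := by
    intro u v h
    (try dsimp only)
    rcases (SimpleGraph.boxProd_adj.mp h) with ⟨h1, h2⟩ | ⟨h1, h2⟩
    · rw [if_pos h2]; exact S1.sign_mem _ _ h1
    · rw [if_neg h1.ne]; exact S2.sign_mem _ _ h1
/-- The HG-lexicographic product of signed graphs. -/
noncomputable def lexHG (S1 : SGraph V1) (S2 : SGraph V2) : SGraph (V1 × V2) where
  G := { Adj := fun p q => S1.G.Adj p.1 q.1 ∨ (p.1 = q.1 ∧ S2.G.Adj p.2 q.2)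
         symm := by
           refine ⟨?_⟩
           rintro p q (h | ⟨h1, h2⟩)
           · exact Or.inl h.symm
           · exact Or.inr ⟨h1.symm, h2.symm⟩
         loopless := by
           refine ⟨?_⟩
           rintro p (h | ⟨_, h⟩)
           · exact S1.G.irrefl h
           · exact S2.G.irrefl h }
  sign := fun p q => if p.1 = q.1 then S2.sign p.2 q.2 else S1.sign p.1 q.1
  sign_symm := by
    intro u v
    (try dsimp only)
    rcases eq_or_ne u.1 v.1 with h | h
    · rw [if_pos h, if_pos h.symm, S2.sign_symm]
    · rw [if_neg h, if_neg (Ne.symm h), S1.sign_symm]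
  sign_mem := by
    rintro p q (h | ⟨h1, h2⟩)
    · (try dsimp only); rw [if_neg h.ne]; exact S1.sign_mem _ _ h
    · (try dsimp only); rw [if_pos h1]; exact S2.sign_mem _ _ h2

/-- The BCD-lexicographic product of signed graphs. -/
noncomputable def lexBCD (S1 : SGraph V1) (S2 : SGraph V2) : SGraph (V1 × V2) where
  G := { Adj := fun p q => S1.G.Adj p.1 q.1 ∨ (p.1 = q.1 ∧ S2.G.Adj p.2 q.2)
         symm := by
           refine ⟨?_⟩
           rintro p q (h | ⟨h1, h2⟩)
           · exact Or.inl h.symm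
           · exact Or.inr ⟨h1.symm, h2.symm⟩
         loopless := by
           refine ⟨?_⟩
           rintro p (h | ⟨_, h⟩)
           · exact S1.G.irrefl h
           · exact S2.G.irrefl h }
  sign := fun p q =>
    if S2.G.Adj p.2 q.2 then
      (if S1.G.Adj p.1 q.1 then S1.sign p.1 q.1 * S2.sign p.2 q.2 else S2.sign p.2 q.2)
    else S1.sign p.1 q.1
  sign_symm := by
    intro u v
    (try dsimp only)
    rw [S1.G.adj_comm v.1 u.1, S2.G.adj_comm v.2 u.2, S1.sign_symm v.1 u.1,
      S2.sign_symm v.2 u.2]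
  sign_mem := by
    rintro p q (h | ⟨h1, h2⟩) <;> (try dsimp only)
    · by_cases h2 : S2.G.Adj p.2 q.2
      · rw [if_pos h2, if_pos h]
        rcases S1.sign_mem _ _ h with e1 | e1 <;> rcases S2.sign_mem _ _ h2 with e2 | e2 <;>
          simp [e1, e2]
      · rw [if_neg h2]; exact S1.sign_mem _ _ h
    · rw [if_pos h2, if_neg (h1 ▸ S1.G.irrefl)]
      exact S2.sign_mem _ _ h2

/-- The tensor product of signed graphs. -/
def tensorProd (S1 : SGraph V1) (S2 : SGraph V2) : SGraph (V1 × V2) where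
  G := { Adj := fun p q => S1.G.Adj p.1 q.1 ∧ S2.G.Adj p.2 q.2
         symm := ⟨fun p q ⟨h1, h2⟩ => ⟨h1.symm, h2.symm⟩⟩
         loopless := ⟨fun p ⟨h1, _⟩ => S1.G.irrefl h1⟩ }
  sign := fun p q => S1.sign p.1 q.1 * S2.sign p.2 q.2
  sign_symm := by
    intro u v
    (try dsimp only)
    rw [S1.sign_symm, S2.sign_symm]
  sign_mem := by
    rintro p q ⟨h1, h2⟩
    (try dsimp only)
    rcases S1.sign_mem _ _ h1 with e1 | e1 <;> rcases S2.sign_mem _ _ h2 with e2 | e2 <;>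
      simp [e1, e2]

/-- The strong product of signed graphs. -/
noncomputable def strongProd (S1 : SGraph V1) (S2 : SGraph V2) : SGraph (V1 × V2) where
  G := { Adj := fun p q => (S1.G.Adj p.1 q.1 ∧ p.2 = q.2) ∨ (p.1 = q.1 ∧ S2.G.Adj p.2 q.2) ∨
           (S1.G.Adj p.1 q.1 ∧ S2.G.Adj p.2 q.2)
         symm := by
           refine ⟨?_⟩
           rintro p q (⟨h1, h2⟩ | ⟨h1, h2⟩ | ⟨h1, h2⟩)
           · exact Or.inl ⟨h1.symm, h2.symm⟩
           · exact Or.inr (Or.inl ⟨h1.symm, h2.symm⟩)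
           · exact Or.inr (Or.inr ⟨h1.symm, h2.symm⟩)
         loopless := by
           refine ⟨?_⟩
           rintro p (⟨h1, _⟩ | ⟨_, h2⟩ | ⟨h1, _⟩)
           · exact S1.G.irrefl h1
           · exact S2.G.irrefl h2
           · exact S1.G.irrefl h1 }
  sign := fun p q =>
    if p.1 = q.1 then S2.sign p.2 q.2
    else if p.2 = q.2 then S1.sign p.1 q.1
    else S1.sign p.1 q.1 * S2.sign p.2 q.2
  sign_symm := by
    intro u v
    (try dsimp only)
    rcases eq_or_ne u.1 v.1 with h | h
    · rw [if_pos h, if_pos h.symm, S2.sign_symm]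
    · rw [if_neg h, if_neg (Ne.symm h)]
      rcases eq_or_ne u.2 v.2 with h' | h'
      · rw [if_pos h', if_pos h'.symm, S1.sign_symm]
      · rw [if_neg h', if_neg (Ne.symm h'), S1.sign_symm, S2.sign_symm]
  sign_mem := by
    rintro p q (⟨h1, h2⟩ | ⟨h1, h2⟩ | ⟨h1, h2⟩) <;> (try dsimp only)
    · rw [if_neg h1.ne, if_pos h2]; exact S1.sign_mem _ _ h1
    · rw [if_pos h1]; exact S2.sign_mem _ _ h2
    · rw [if_neg h1.ne, if_neg h2.ne]
      rcases S1.sign_mem _ _ h1 with e1 | e1 <;> rcases S2.sign_mem _ _ h2 with e2 | e2 <;>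
        simp [e1, e2]
/-- The cycle on `ZMod n` (vertices `0,1,…,n-1`) with the single negative edge `{0,1}`. -/
noncomputable def Cneg (n : ℕ) : SGraph (ZMod n) where
  G := { Adj := fun i j => i ≠ j ∧ (i - j = 1 ∨ j - i = 1)
         symm := ⟨fun i j ⟨h1, h2⟩ => ⟨h1.symm, h2.symm⟩⟩
         loopless := ⟨fun i ⟨h1, _⟩ => h1 rfl⟩ }
  sign := fun i j => if (i = 0 ∧ j = 1) ∨ (i = 1 ∧ j = 0) then -1 else 1
  sign_symm := by
    intro u v
    (try dsimp only)
    exact if_congr (by tauto) rfl rfl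
  sign_mem := by
    intro u v _
    (try dsimp only)
    by_cases h : (u = 0 ∧ v = 1) ∨ (u = 1 ∧ v = 0)
    · rw [if_pos h]; exact Or.inr rfl
    · rw [if_neg h]; exact Or.inl rfl

/-- The all-negative complete signed graph on `n` vertices. -/
def Kneg (n : ℕ) : SGraph (Fin n) where
  G := ⊤
  sign := fun _ _ => -1
  sign_symm := fun _ _ => rfl
  sign_mem := fun _ _ _ => Or.inr rfl

/-- The edgeless signed graph on `k` vertices. -/
def Nk (k : ℕ) : SGraph (Fin k) where
  G := ⊥
  sign := fun _ _ => 1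
  sign_symm := fun _ _ => rfl
  sign_mem := fun _ _ h => (h.elim)

/-- The lexicographic product of simple graphs. -/
def lexProdGraph (G : SimpleGraph V1) (H : SimpleGraph V2) : SimpleGraph (V1 × V2) where
  Adj p q := G.Adj p.1 q.1 ∨ (p.1 = q.1 ∧ H.Adj p.2 q.2)
  symm := by
    refine ⟨?_⟩
    rintro p q (h | ⟨h1, h2⟩)
    · exact Or.inl h.symm
    · exact Or.inr ⟨h1.symm, h2.symm⟩
  loopless := by
    refine ⟨?_⟩
    rintro p (h | ⟨_, h⟩)
    · exact G.irrefl h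
    · exact H.irrefl h


theorem Int.sign_eq_self_of_isUnit {a : ℤ} (ha : IsUnit a) : a.sign = a := by
  rcases Int.isUnit_iff.mp ha with rfl | rfl <;> rfl

theorem sum_mul_self_pos {ι : Type*} [Fintype ι] {x : ι → ℤ} (hx : x ≠ 0) :
    0 < ∑ i, x i * x i := by
  refine (Finset.sum_nonneg fun i _ => mul_self_nonneg (x i)).lt_of_ne fun h => hx ?_
  funext i
  exact (Finset.sum_mul_self_eq_zero_iff _ _).mp h.symm i (Finset.mem_univ i)

theorem sum_mul_mul_eq_mul_mul_sum {ι : Type*} [Fintype ι] (c d : ℤ) (x y : ι → ℤ) :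
    ∑ i, c * x i * (d * y i) = c * d * ∑ i, x i * y i := by
  rw [Finset.mul_sum]
  exact Finset.sum_congr rfl fun i _ => by ring

section Switching

variable [Fintype V] {S : SGraph V} {k : ℕ} {ζ : V → Fin k → ℤ}

theorem isPosSwitching_iff : IsPosSwitching S k ζ ↔
    (∀ v i, ζ v i = -1 ∨ ζ v i = 0 ∨ ζ v i = 1) ∧
      ∀ u v, S.G.Adj u v → Int.sign (∑ i, ζ u i * ζ v i) = S.sign u v := by
  constructor
  · rintro ⟨hval, -, hsign⟩
    refine ⟨hval, fun u v huv => ?_⟩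
    have := hsign u v huv
    rcases S.sign_mem u v huv with h | h <;> rw [h] at this ⊢ <;> omega
  · rintro ⟨hval, hsign⟩
    refine ⟨hval, fun u v huv hzero => ?_, fun u v huv => ?_⟩
    · have := hsign u v huv
      rw [hzero, Int.sign_zero] at this
      rcases S.sign_mem u v huv with h | h <;> omega
    · rw [hsign u v huv]
      rcases S.sign_mem u v huv with h | h <;> rw [h] <;> rfl

theorem IsPosSwitching.ne_zero_of_adj (hζ : IsPosSwitching S k ζ) {u v : V} (huv : S.G.Adj u v) :
    ζ u ≠ 0 := fun h => hζ.2.1 u v huv (by simp [h])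

theorem HasPosSwitching.exists_forall_ne_zero (hk : 1 ≤ k) (h : HasPosSwitching S k) :
    ∃ ζ : V → Fin k → ℤ, IsPosSwitching S k ζ ∧ ∀ v, ζ v ≠ 0 := by
  obtain ⟨ζ, hζ⟩ := h
  obtain ⟨hval, hnz, hsign⟩ := id hζ
  let e : Fin k → ℤ := Pi.single ⟨0, hk⟩ 1
  have he : e ≠ 0 := fun h => by simpa [e] using congr_fun h ⟨0, hk⟩
  refine ⟨fun v => if ζ v = 0 then e else ζ v, ⟨fun v i => ?_, fun u v huv => ?_, fun u v huv => ?_⟩,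
    fun v => ?_⟩
  · dsimp only
    split_ifs
    · simp only [e, Pi.single_apply]; split_ifs <;> simp
    · exact hval v i
  · simpa [hζ.ne_zero_of_adj huv, hζ.ne_zero_of_adj huv.symm] using hnz u v huv
  · simpa [hζ.ne_zero_of_adj huv, hζ.ne_zero_of_adj huv.symm] using hsign u v huv
  · dsimp only
    split_ifs with h
    exacts [he, h]

theorem SGraph.Balanced.exists_isUnit_potential (h : S.Balanced) :
    ∃ η : V → ℤ, (∀ v, IsUnit (η v)) ∧ ∀ u v, S.G.Adj u v → S.sign u v = η u * η v := by
  obtain ⟨ζ, hζ, hζ0⟩ := h.exists_forall_ne_zero le_rfl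
  have hunit : ∀ v, IsUnit (ζ v 0) := by
    intro v
    have h0 : ζ v 0 ≠ 0 := fun h => hζ0 v (funext fun i => Subsingleton.elim i 0 ▸ h)
    have := hζ.1 v 0
    exact Int.isUnit_iff.mpr (by omega)
  refine ⟨fun v => ζ v 0, hunit, fun u v huv => ?_⟩
  have := (isPosSwitching_iff.mp hζ).2 u v huv
  rwa [Fin.sum_univ_one, Int.sign_eq_self_of_isUnit ((hunit u).mul (hunit v)), eq_comm] at this

end Switching

section CartesianProduct

variable [Fintype V1] [Fintype V2] {S1 : SGraph V1} {S2 : SGraph V2} {k : ℕ}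

theorem IsPosSwitching.cartProd_of_potential {ζ : V1 → Fin k → ℤ} (hζ : IsPosSwitching S1 k ζ)
    (hζ0 : ∀ u, ζ u ≠ 0) {η : V2 → ℤ} (hη : ∀ v, IsUnit (η v))
    (hS2 : ∀ a b, S2.G.Adj a b → S2.sign a b = η a * η b) :
    IsPosSwitching (cartProd S1 S2) k (fun p i => η p.2 * ζ p.1 i) := by
  refine isPosSwitching_iff.mpr ⟨fun p i => ?_, ?_⟩
  · rcases Int.isUnit_iff.mp (hη p.2) with h | h <;> rcases hζ.1 p.1 i with h' | h' | h' <;>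
      simp [h, h']
  rintro ⟨u, a⟩ ⟨u', b⟩ hadj
  rw [sum_mul_mul_eq_mul_mul_sum]
  rcases SimpleGraph.boxProd_adj.mp hadj with ⟨huu', rfl⟩ | ⟨hab, rfl⟩
  · simp only [cartProd, if_true, Int.isUnit_mul_self (hη a), one_mul]
    exact (isPosSwitching_iff.mp hζ).2 u u' huu'
  · simp only [cartProd, if_neg hab.ne, Int.sign_mul,
      Int.sign_eq_one_of_pos (sum_mul_self_pos (hζ0 u)), mul_one,
      Int.sign_eq_self_of_isUnit ((hη a).mul (hη b)), hS2 a b hab]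

theorem IsPosSwitching.of_cartProd {ζ : V1 × V2 → Fin k → ℤ}
    (hζ : IsPosSwitching (cartProd S1 S2) k ζ) (b : V2) :
    IsPosSwitching S1 k (fun u => ζ (u, b)) := by
  refine isPosSwitching_iff.mpr ⟨fun u => hζ.1 (u, b), fun u u' huu' => ?_⟩
  simpa [cartProd] using
    (isPosSwitching_iff.mp hζ).2 (u, b) (u', b) (SimpleGraph.boxProd_adj.mpr (Or.inl ⟨huu', rfl⟩))

theorem hasPosSwitching_cartProd_iff [Nonempty V2] (hS2 : S2.Balanced) (hk : 1 ≤ k) :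
    HasPosSwitching (cartProd S1 S2) k ↔ HasPosSwitching S1 k := by
  constructor
  · rintro ⟨ζ, hζ⟩
    exact ⟨_, hζ.of_cartProd (Classical.arbitrary V2)⟩
  · intro h
    obtain ⟨ζ, hζ, hζ0⟩ := h.exists_forall_ne_zero hk
    obtain ⟨η, hη, hS2η⟩ := hS2.exists_isUnit_potential
    exact ⟨_, hζ.cartProd_of_potential hζ0 hη hS2η⟩

end CartesianProduct

theorem stmt0 [Fintype V1] [Fintype V2] [Nonempty V2] (S1 : SGraph V1) (S2 : SGraph V2)
    (h2 : S2.Balanced) : bdim (cartProd S1 S2) = bdim S1 := by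
  unfold bdim
  congr 1
  ext k
  exact and_congr_right (hasPosSwitching_cartProd_iff h2)
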